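/- arXiv:1504.06028 — 2 statements merged into one kernel-verified Lean document; each statement's English description precedes it below -/
import Mathlib

section
/- For any estimator Ŷ of W (a function of the observation X in a Markov chain W → X → Ŷ), the expected distortion satisfies E[ℓ(W,Ŷ)] ≥ sup_{ρ>0} ρ·(1 − (I(W;X) + log 2)/log(1/L(W,ρ))). -/
open Finset Real

def IsPMF {α : Type*} [Fintype α] (p : α → ℝ) : Prop :=
  (∀ x, 0 ≤ p x) ∧ ∑ x, p x = 1

noncomputable def KL2 {α : Type*} [Fintype α] (p q : α → ℝ) : ℝ :=
  ∑ x, p x * Real.logb 2 (p x / q x)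

noncomputable def MI2 {α β : Type*} [Fintype α] [Fintype β] (p : α × β → ℝ) : ℝ :=
  ∑ x : α × β, p x * Real.logb 2 (p x / ((∑ b, p (x.1, b)) * (∑ a, p (a, x.2))))

noncomputable def H2 {α : Type*} [Fintype α] (p : α → ℝ) : ℝ :=
  -∑ x, p x * Real.logb 2 (p x)

noncomputable def push {α β : Type*} [Fintype α] (μ : α → ℝ) (K : α → β → ℝ) : β → ℝ :=
  fun y => ∑ x, μ x * K x y

noncomputable def binH (p : ℝ) : ℝ :=
  -(p * Real.logb 2 p) - (1 - p) * Real.logb 2 (1 - p)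

noncomputable def etaAt {α β : Type*} [Fintype α] [Fintype β]
    (μ : α → ℝ) (K : α → β → ℝ) : ℝ :=
  sSup { r | ∃ ν : α → ℝ, IsPMF ν ∧ (∀ x, μ x = 0 → ν x = 0) ∧ 0 < KL2 ν μ ∧
    r = KL2 (push ν K) (push μ K) / KL2 ν μ }

noncomputable def etaCh {α β : Type*} [Fintype α] [Fintype β] (K : α → β → ℝ) : ℝ :=
  sSup { r | ∃ μ ν : α → ℝ, IsPMF μ ∧ IsPMF ν ∧ (∀ x, μ x = 0 → ν x = 0) ∧
    0 < KL2 ν μ ∧ r = KL2 (push ν K) (push μ K) / KL2 ν μ }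

noncomputable def capacity2 {U V : Type*} [Fintype U] [Fintype V] (Ch : U → V → ℝ) : ℝ :=
  sSup { r | ∃ μ : U → ℝ, IsPMF μ ∧ r = MI2 (fun uv : U × V => μ uv.1 * Ch uv.1 uv.2) }

noncomputable def BSC (ε : ℝ) : Bool → Bool → ℝ := fun u v => if v = u then 1 - ε else ε

/-!
Let `A` be the event `ℓ(W, ψ X) ≤ ρ`. Markov's inequality gives `E ℓ ≥ ρ (1 - P(A))`. Under the
product of the marginals `Q = P_W ⊗ P_X` the event `A` has probability at most `L`, since for each
`x` its section is a ball around `ψ x`. Since `I(W;X) = D(P_{WX} ‖ Q)`, data processing through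
the indicator of `A` (the log-sum inequality on `A` and its complement) bounds it below by the
binary divergence `d(P(A) ‖ Q(A)) ≥ P(A) log₂(1/L) - h(P(A)) ≥ P(A) log₂(1/L) - 1`.
-/

noncomputable def binKL2 (p t : ℝ) : ℝ :=
  p * logb 2 (p / t) + (1 - p) * logb 2 ((1 - p) / (1 - t))

noncomputable def prodMarginals {α β : Type*} [Fintype α] [Fintype β] (q : α × β → ℝ) :
    α × β → ℝ :=
  fun z => (∑ b, q (z.1, b)) * (∑ a, q (a, z.2))

theorem MI2_eq_KL2_prodMarginals {α β : Type*} [Fintype α] [Fintype β] (q : α × β → ℝ) :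
    MI2 q = KL2 q (prodMarginals q) :=
  rfl

theorem sub_mul_le_mul_log_div_sub {a b c : ℝ} (ha : 0 ≤ a) (hb : 0 ≤ b)
    (hab : b = 0 → a = 0) (hc : 0 < c) :
    a - b * c ≤ a * log (a / b) - a * log c := by
  rcases ha.eq_or_lt with rfl | ha
  · simp only [zero_mul, zero_sub, sub_zero, neg_nonpos]
    positivity
  have hb : 0 < b := hb.lt_of_ne fun h => ha.ne' (hab h.symm)
  have key := Real.one_sub_inv_le_log_of_pos (by positivity : 0 < a / (b * c))
  rw [Real.log_div ha.ne' (by positivity), Real.log_mul hb.ne' hc.ne', inv_div] at key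
  rw [Real.log_div ha.ne' hb.ne']
  have := mul_le_mul_of_nonneg_left key ha.le
  rw [mul_sub, mul_one, mul_div_cancel₀ _ ha.ne'] at this
  linarith

theorem sum_mul_log_div_le {ι : Type*} (s : Finset ι) (a b : ι → ℝ)
    (ha : ∀ i ∈ s, 0 ≤ a i) (hb : ∀ i ∈ s, 0 ≤ b i) (hab : ∀ i ∈ s, b i = 0 → a i = 0) :
    (∑ i ∈ s, a i) * log ((∑ i ∈ s, a i) / ∑ i ∈ s, b i) ≤ ∑ i ∈ s, a i * log (a i / b i) := by
  set A := ∑ i ∈ s, a i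
  set B := ∑ i ∈ s, b i
  rcases (Finset.sum_nonneg ha : 0 ≤ A).eq_or_lt with hA | hA
  · rw [show A = 0 from hA.symm, zero_mul]
    refine Finset.sum_nonneg fun i hi => ?_
    rw [(Finset.sum_eq_zero_iff_of_nonneg ha).mp hA.symm i hi, zero_mul]
  have hB : 0 < B := (Finset.sum_nonneg hb : 0 ≤ B).lt_of_ne fun hB => hA.ne' <|
    Finset.sum_eq_zero fun i hi => hab i hi ((Finset.sum_eq_zero_iff_of_nonneg hb).mp hB.symm i hi)
  have key := Finset.sum_le_sum fun i hi =>
    sub_mul_le_mul_log_div_sub (ha i hi) (hb i hi) (hab i hi) (div_pos hA hB)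
  rw [Finset.sum_sub_distrib, Finset.sum_sub_distrib, ← Finset.sum_mul, ← Finset.sum_mul,
    mul_div_cancel₀ _ hB.ne', sub_self] at key
  linarith

theorem sum_mul_logb_div_le {ι : Type*} {c : ℝ} (hc : 1 < c) (s : Finset ι) (a b : ι → ℝ)
    (ha : ∀ i ∈ s, 0 ≤ a i) (hb : ∀ i ∈ s, 0 ≤ b i) (hab : ∀ i ∈ s, b i = 0 → a i = 0) :
    (∑ i ∈ s, a i) * logb c ((∑ i ∈ s, a i) / ∑ i ∈ s, b i) ≤
      ∑ i ∈ s, a i * logb c (a i / b i) := by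
  simp only [Real.logb, ← mul_div_assoc, ← Finset.sum_div]
  exact div_le_div_of_nonneg_right (sum_mul_log_div_le s a b ha hb hab) (Real.log_pos hc).le

theorem binKL2_le_KL2 {ι : Type*} [Fintype ι] {p r : ι → ℝ} (hp : IsPMF p) (hr : IsPMF r)
    (hrp : ∀ i, r i = 0 → p i = 0) (s : Finset ι) :
    binKL2 (∑ i ∈ s, p i) (∑ i ∈ s, r i) ≤ KL2 p r := by
  classical
  have hcompl : ∀ f : ι → ℝ, ∑ i, f i = 1 → ∑ i ∈ sᶜ, f i = 1 - ∑ i ∈ s, f i := fun f hf => by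
    rw [← hf, ← Finset.sum_add_sum_compl s f, add_sub_cancel_left]
  have logSum := fun t : Finset ι =>
    sum_mul_logb_div_le one_lt_two t p r (fun i _ => hp.1 i) (fun i _ => hr.1 i) (fun i _ => hrp i)
  rw [binKL2, KL2, ← Finset.sum_add_sum_compl s, ← hcompl p hp.2, ← hcompl r hr.2]
  exact add_le_add (logSum s) (logSum sᶜ)

theorem binH_le_one (p : ℝ) : binH p ≤ 1 := by
  have h := Real.binEntropy_le_log_two (p := p)
  rw [Real.binEntropy, Real.log_inv, Real.log_inv] at h
  rw [binH, Real.logb, Real.logb]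
  calc -(p * (log p / log 2)) - (1 - p) * (log (1 - p) / log 2)
      = -(p * log p + (1 - p) * log (1 - p)) / log 2 := by ring
    _ ≤ log 2 / log 2 := div_le_div_of_nonneg_right (by linarith) (Real.log_pos one_lt_two).le
    _ = 1 := div_self (Real.log_pos one_lt_two).ne'

theorem mul_logb_div_eq_sub {a b c : ℝ} (hab : b = 0 → a = 0) :
    a * logb c (a / b) = a * logb c a - a * logb c b := by
  rcases eq_or_ne a 0 with rfl | ha
  · simp
  · rw [Real.logb_div ha fun hb => ha (hab hb), mul_sub]

theorem mul_logb_inv_le_binKL2_add_one {p t L : ℝ} (hp0 : 0 ≤ p) (hp1 : p ≤ 1) (ht0 : 0 ≤ t)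
    (htL : t ≤ L) (hL1 : L < 1) (hpt : t = 0 → p = 0) :
    p * logb 2 (1 / L) ≤ binKL2 p t + 1 := by
  have hdecomp : binKL2 p t = -binH p - p * logb 2 t - (1 - p) * logb 2 (1 - t) := by
    rw [binKL2, binH, mul_logb_div_eq_sub hpt,
      mul_logb_div_eq_sub fun h => absurd h (by linarith)]
    ring
  have hsecond : (1 - p) * logb 2 (1 - t) ≤ 0 :=
    mul_nonpos_of_nonneg_of_nonpos (by linarith)
      (Real.logb_nonpos one_lt_two (by linarith) (by linarith))
  have hfirst : p * logb 2 t ≤ p * logb 2 L := by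
    rcases hp0.eq_or_lt with rfl | hp
    · simp
    have ht : 0 < t := ht0.lt_of_ne fun h => hp.ne' (hpt h.symm)
    exact mul_le_mul_of_nonneg_left (Real.logb_le_logb_of_le one_lt_two ht htL) hp.le
  rw [one_div, Real.logb_inv]
  linarith [binH_le_one p]

theorem IsPMF.sum_le_one {ι : Type*} [Fintype ι] {p : ι → ℝ} (hp : IsPMF p) (s : Finset ι) :
    ∑ i ∈ s, p i ≤ 1 :=
  hp.2 ▸ Finset.sum_le_sum_of_subset_of_nonneg (Finset.subset_univ s) fun i _ _ => hp.1 i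

theorem sum_mul_logb_inv_le_KL2_add_one {ι : Type*} [Fintype ι] {p r : ι → ℝ} (hp : IsPMF p)
    (hr : IsPMF r) (hrp : ∀ i, r i = 0 → p i = 0) {s : Finset ι} {L : ℝ}
    (hsL : ∑ i ∈ s, r i ≤ L) (hL1 : L < 1) :
    (∑ i ∈ s, p i) * logb 2 (1 / L) ≤ KL2 p r + 1 := by
  have hpt : ∑ i ∈ s, r i = 0 → ∑ i ∈ s, p i = 0 := fun h =>
    Finset.sum_eq_zero fun i hi =>
      hrp i ((Finset.sum_eq_zero_iff_of_nonneg fun i _ => hr.1 i).mp h i hi)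
  calc (∑ i ∈ s, p i) * logb 2 (1 / L) ≤ binKL2 (∑ i ∈ s, p i) (∑ i ∈ s, r i) + 1 :=
        mul_logb_inv_le_binKL2_add_one (Finset.sum_nonneg fun i _ => hp.1 i) (hp.sum_le_one s)
          (Finset.sum_nonneg fun i _ => hr.1 i) hsL hL1 hpt
    _ ≤ KL2 p r + 1 := by linarith [binKL2_le_KL2 hp hr hrp s]

section Marginals

variable {α β : Type*} [Fintype α] [Fintype β] {q : α × β → ℝ}

theorem IsPMF.prodMarginals (hq : IsPMF q) : IsPMF (prodMarginals q) := by
  refine ⟨fun z => mul_nonneg (Finset.sum_nonneg fun b _ => hq.1 _)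
    (Finset.sum_nonneg fun a _ => hq.1 _), ?_⟩
  have hfst : ∑ a, ∑ b, q (a, b) = 1 := by rw [← Fintype.sum_prod_type, hq.2]
  have hsnd : ∑ b, ∑ a, q (a, b) = 1 := by rw [← Fintype.sum_prod_type_right, hq.2]
  simp only [_root_.prodMarginals, Fintype.sum_prod_type, ← Finset.sum_mul_sum, hfst, hsnd,
    mul_one]

theorem prodMarginals_eq_zero (hq : ∀ z, 0 ≤ q z) {z : α × β} (hz : prodMarginals q z = 0) :
    q z = 0 := by
  have hfst : q z ≤ ∑ b, q (z.1, b) :=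
    Finset.single_le_sum (f := fun b => q (z.1, b)) (fun b _ => hq _) (Finset.mem_univ z.2)
  have hsnd : q z ≤ ∑ a, q (a, z.2) :=
    Finset.single_le_sum (f := fun a => q (a, z.2)) (fun a _ => hq _) (Finset.mem_univ z.1)
  rcases mul_eq_zero.mp hz with h | h <;> linarith [hq z]

end Marginals

theorem sum_filter_prodMarginals_le_sup' {α β γ : Type*} [Fintype α] [Fintype β] [Fintype γ]
    [Nonempty γ] {q : α × β → ℝ} (hq : IsPMF q) (ℓ : α → γ → ℝ) (ρ : ℝ) (ψ : β → γ) :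
    ∑ z ∈ univ.filter (fun z : α × β => ℓ z.1 (ψ z.2) ≤ ρ), prodMarginals q z ≤
      univ.sup' univ_nonempty (fun g : γ => ∑ z : α × β, if ℓ z.1 g ≤ ρ then q z else 0) := by
  set L := univ.sup' univ_nonempty (fun g : γ => ∑ z : α × β, if ℓ z.1 g ≤ ρ then q z else 0)
  have hball : ∀ b, ∑ a, (if ℓ a (ψ b) ≤ ρ then ∑ b', q (a, b') else 0) ≤ L := fun b => by
    refine le_of_eq_of_le ?_ (Finset.le_sup' _ (Finset.mem_univ (ψ b)))
    rw [Fintype.sum_prod_type]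
    exact Finset.sum_congr rfl fun a _ => by split_ifs <;> simp
  calc ∑ z ∈ univ.filter (fun z : α × β => ℓ z.1 (ψ z.2) ≤ ρ), prodMarginals q z
      = ∑ b, (∑ a, q (a, b)) * ∑ a, (if ℓ a (ψ b) ≤ ρ then ∑ b', q (a, b') else 0) := by
        rw [Finset.sum_filter, Fintype.sum_prod_type_right]
        refine Finset.sum_congr rfl fun b _ => ?_
        rw [Finset.mul_sum]
        exact Finset.sum_congr rfl fun a _ => by split_ifs <;> simp [prodMarginals, mul_comm]
    _ ≤ ∑ b, (∑ a, q (a, b)) * L :=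
        Finset.sum_le_sum fun b _ => mul_le_mul_of_nonneg_left (hball b)
          (Finset.sum_nonneg fun a _ => hq.1 _)
    _ = L := by
        rw [← Finset.sum_mul, ← Fintype.sum_prod_type_right, hq.2, one_mul]

theorem mul_sum_filter_lt_le_sum_mul {ι : Type*} [Fintype ι] {q f : ι → ℝ}
    (hq : ∀ i, 0 ≤ q i) (hf : ∀ i, 0 ≤ f i) (ρ : ℝ) :
    ρ * ∑ i ∈ univ.filter (fun i => ρ < f i), q i ≤ ∑ i, q i * f i :=
  calc ρ * ∑ i ∈ univ.filter (fun i => ρ < f i), q i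
      = ∑ i ∈ univ.filter (fun i => ρ < f i), q i * ρ := by
        rw [Finset.mul_sum]; simp only [mul_comm]
    _ ≤ ∑ i ∈ univ.filter (fun i => ρ < f i), q i * f i :=
        Finset.sum_le_sum fun i hi =>
          mul_le_mul_of_nonneg_left (Finset.mem_filter.mp hi).2.le (hq i)
    _ ≤ ∑ i, q i * f i :=
        Finset.sum_le_sum_of_subset_of_nonneg (Finset.filter_subset _ _)
          fun i _ _ => mul_nonneg (hq i) (hf i)

/-- Bayes risk lower bound: E[ℓ(W,Ŷ)] ≥ sup_{ρ>0} ρ(1 − (I(W;X)+log 2)/log(1/L(W,ρ))),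
stated as: for every ρ > 0 (with the small ball probability in (0,1)), the bound holds. -/
theorem bayes_risk_lower_bound
    {W X : Type*} [Fintype W] [Fintype X] [Nonempty W]
    (q : W × X → ℝ) (hq : IsPMF q)
    (ψ : X → W)
    (ℓ : W → W → ℝ) (hℓ : ∀ w w', 0 ≤ ℓ w w')
    (ρ : ℝ) (hρ : 0 < ρ)
    (L : ℝ)
    (hL : L = Finset.univ.sup' Finset.univ_nonempty
      (fun w' : W => ∑ z : W × X, if ℓ z.1 w' ≤ ρ then q z else 0))
    (hL0 : 0 < L) (hL1 : L < 1) :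
    (∑ z : W × X, q z * ℓ z.1 (ψ z.2)) ≥
      ρ * (1 - (MI2 q + 1) / Real.logb 2 (1 / L)) := by
  set s := univ.filter fun z : W × X => ℓ z.1 (ψ z.2) ≤ ρ
  have hmiss : ∑ z ∈ univ.filter (fun z : W × X => ρ < ℓ z.1 (ψ z.2)), q z = 1 - ∑ z ∈ s, q z := by
    simp_rw [← not_le, ← hq.2, ← Finset.sum_filter_add_sum_filter_not univ
      (fun z : W × X => ℓ z.1 (ψ z.2) ≤ ρ), s, add_sub_cancel_left]
  have hmarkov := hmiss ▸ mul_sum_filter_lt_le_sum_mul hq.1 (fun z => hℓ z.1 (ψ z.2)) ρ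
  have hsmall : ∑ z ∈ s, prodMarginals q z ≤ L := hL ▸ sum_filter_prodMarginals_le_sup' hq ℓ ρ ψ
  have hhit : (∑ z ∈ s, q z) * logb 2 (1 / L) ≤ MI2 q + 1 := by
    rw [MI2_eq_KL2_prodMarginals]
    exact sum_mul_logb_inv_le_KL2_add_one hq hq.prodMarginals (fun _ => prodMarginals_eq_zero hq.1)
      hsmall hL1
  have hlogL : 0 < logb 2 (1 / L) := Real.logb_pos one_lt_two (one_lt_one_div hL0 hL1)
  calc ρ * (1 - (MI2 q + 1) / logb 2 (1 / L)) ≤ ρ * (1 - ∑ z ∈ s, q z) :=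
        mul_le_mul_of_nonneg_left (by linarith [(le_div_iff₀ hlogL).mpr hhit]) hρ.le
    _ ≤ ∑ z : W × X, q z * ℓ z.1 (ψ z.2) := hmarkov
end

section
/- For a memoryless channel consisting of T independent uses of a kernel P_{V|U} with SDPI constant η, and any Markov chain Y → U^T → V^T, we have I(Y;V^T) ≤ (1 − (1−η)^T) · I(Y;U^T). -/
open Finset Real

-- Auxiliary development ----------------------------------------------------
set_option linter.unusedSectionVars false
set_option linter.unusedVariables false

section Aux
variable {α β : Type*} [Fintype α] [Fintype β]

def AC (p q : α → ℝ) : Prop := ∀ x, q x = 0 → p x = 0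

noncomputable def KLn (p q : α → ℝ) : ℝ := ∑ x, p x * Real.log (p x / q x)

lemma KL2_eq_KLn (p q : α → ℝ) : KL2 p q = KLn p q / Real.log 2 := by
  unfold KL2 KLn Real.logb
  rw [Finset.sum_div]
  exact Finset.sum_congr rfl fun x _ => by rw [mul_div_assoc]

lemma KLn_self (p : α → ℝ) : KLn p p = 0 := by
  unfold KLn
  refine Finset.sum_eq_zero fun x _ => ?_
  by_cases h : p x = 0
  · simp [h]
  · rw [div_self h, Real.log_one, mul_zero]

lemma KLn_nonneg {p q : α → ℝ} (hp : IsPMF p) (hq : IsPMF q) (h : AC p q) :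
    0 ≤ KLn p q := by
  have key : ∑ x, p x * Real.log (q x / p x) ≤ 0 := by
    calc ∑ x, p x * Real.log (q x / p x) ≤ ∑ x, (q x - p x) := by
          refine Finset.sum_le_sum fun x _ => ?_
          rcases eq_or_lt_of_le (hp.1 x) with h0 | h0
          · simp [← h0, hq.1 x]
          · have hqx : 0 < q x := by
              rcases eq_or_lt_of_le (hq.1 x) with h1 | h1
              · exact absurd (h x h1.symm) (ne_of_gt h0)
              · exact h1
            have := Real.log_le_sub_one_of_pos (div_pos hqx h0)
            calc p x * Real.log (q x / p x) ≤ p x * (q x / p x - 1) :=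
                  mul_le_mul_of_nonneg_left this (le_of_lt h0)
              _ = q x - p x := by field_simp
      _ = 0 := by rw [Finset.sum_sub_distrib, hp.2, hq.2, sub_self]
  have : KLn p q = -∑ x, p x * Real.log (q x / p x) := by
    unfold KLn
    rw [← Finset.sum_neg_distrib]
    refine Finset.sum_congr rfl fun x _ => ?_
    by_cases h0 : p x = 0
    · simp [h0]
    · rw [show p x / q x = (q x / p x)⁻¹ from (inv_div _ _).symm, Real.log_inv]; ring
  rw [this]
  linarith
end Aux

section B
variable {α β : Type*} [Fintype α] [Fintype β]

noncomputable def margA (p : α × β → ℝ) : α → ℝ := fun a => ∑ b, p (a, b)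
noncomputable def margB (p : α × β → ℝ) : β → ℝ := fun b => ∑ a, p (a, b)
noncomputable def condB (p : α × β → ℝ) (a : α) : β → ℝ := fun b => p (a, b) / margA p a

variable {p q : α × β → ℝ}

lemma margA_nonneg (hp : ∀ x, 0 ≤ p x) (a : α) : 0 ≤ margA p a :=
  Finset.sum_nonneg fun b _ => hp (a, b)

lemma le_margA (hp : ∀ x, 0 ≤ p x) (a : α) (b : β) : p (a, b) ≤ margA p a :=
  Finset.single_le_sum (f := fun b => p (a, b)) (fun b _ => hp (a, b)) (Finset.mem_univ b)

lemma margA_eq_zero (hp : ∀ x, 0 ≤ p x) {a : α} (h : margA p a = 0) (b : β) : p (a, b) = 0 :=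
  le_antisymm (h ▸ le_margA hp a b) (hp (a, b))

lemma margA_isPMF (hp : IsPMF p) : IsPMF (margA p) :=
  ⟨margA_nonneg hp.1, by rw [← hp.2, Fintype.sum_prod_type]; rfl⟩

lemma margB_isPMF (hp : IsPMF p) : IsPMF (margB p) :=
  ⟨fun b => Finset.sum_nonneg fun a _ => hp.1 (a, b),
   by rw [← hp.2, Fintype.sum_prod_type_right]; rfl⟩

lemma AC_margA (hq : ∀ x, 0 ≤ q x) (hac : AC p q) : AC (margA p) (margA q) := fun a h =>
  Finset.sum_eq_zero fun b _ => hac _ (margA_eq_zero hq h b)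

lemma condB_isPMF (hp : IsPMF p) {a : α} (ha : margA p a ≠ 0) : IsPMF (condB p a) := by
  refine ⟨fun b => div_nonneg (hp.1 (a, b)) (margA_nonneg hp.1 a), ?_⟩
  unfold condB
  rw [← Finset.sum_div, div_eq_one_iff_eq ha]
  rfl

lemma condB_AC (hq : ∀ x, 0 ≤ q x) (hac : AC p q) (a : α) :
    AC (condB p a) (condB q a) := by
  intro b h
  unfold condB at h ⊢
  by_cases hm : margA q a = 0
  · rw [hac _ (margA_eq_zero hq hm b), zero_div]
  · rw [div_eq_zero_iff] at h
    rcases h with h | h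
    · rw [hac _ h, zero_div]
    · exact absurd h hm

lemma KLn_chain (hp : IsPMF p) (hq : IsPMF q) (hac : AC p q) :
    KLn p q = KLn (margA p) (margA q) + ∑ a, margA p a * KLn (condB p a) (condB q a) := by
  unfold KLn
  rw [Fintype.sum_prod_type, ← Finset.sum_add_distrib]
  refine Finset.sum_congr rfl fun a _ => ?_
  by_cases hma : margA p a = 0
  · rw [hma]
    simp only [zero_mul, zero_div, add_zero]
    rw [Finset.sum_eq_zero fun b _ => by rw [margA_eq_zero hp.1 hma b, zero_mul]]
  · have hmapos : 0 < margA p a := lt_of_le_of_ne (margA_nonneg hp.1 a) (Ne.symm hma)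
    have hmq : margA q a ≠ 0 := fun h => hma (Finset.sum_eq_zero fun b _ =>
      hac _ (margA_eq_zero hq.1 h b))
    have hmqpos : 0 < margA q a := lt_of_le_of_ne (margA_nonneg hq.1 a) (Ne.symm hmq)
    have step : ∀ b, margA p a * (condB p a b * Real.log (condB p a b / condB q a b)) =
        p (a, b) * Real.log (p (a, b) / q (a, b)) - p (a, b) * Real.log (margA p a / margA q a) := by
      intro b
      unfold condB
      by_cases hpb : p (a, b) = 0
      · simp [hpb]
      · have hppos : 0 < p (a, b) := lt_of_le_of_ne (hp.1 (a, b)) (Ne.symm hpb)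
        have hqb : q (a, b) ≠ 0 := fun h => hpb (hac _ h)
        have hqpos : 0 < q (a, b) := lt_of_le_of_ne (hq.1 (a, b)) (Ne.symm hqb)
        have harg : (p (a, b) / margA p a) / (q (a, b) / margA q a) =
            (p (a, b) / q (a, b)) * (margA q a / margA p a) := by
          field_simp
        have hc : margA p a * (p (a, b) / margA p a) = p (a, b) := by field_simp
        rw [← mul_assoc, hc, harg, Real.log_mul (by positivity) (by positivity),
          Real.log_div (ne_of_gt hmqpos) (ne_of_gt hmapos),
          Real.log_div (ne_of_gt hmapos) (ne_of_gt hmqpos)]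
        ring
    have key : margA p a * KLn (condB p a) (condB q a) =
        (∑ b, p (a, b) * Real.log (p (a, b) / q (a, b))) -
          margA p a * Real.log (margA p a / margA q a) := by
      unfold KLn
      rw [Finset.mul_sum, Finset.sum_congr rfl fun b _ => step b,
        Finset.sum_sub_distrib, ← Finset.sum_mul]
      rfl
    unfold KLn at key
    linarith

lemma KLn_margA_le (hp : IsPMF p) (hq : IsPMF q) (hac : AC p q) :
    KLn (margA p) (margA q) ≤ KLn p q := by
  rw [KLn_chain hp hq hac]
  have : 0 ≤ ∑ a, margA p a * KLn (condB p a) (condB q a) := by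
    refine Finset.sum_nonneg fun a _ => ?_
    by_cases hma : margA p a = 0
    · rw [hma, zero_mul]
    · have hmq : margA q a ≠ 0 := fun h => hma (Finset.sum_eq_zero fun b _ =>
        hac _ (margA_eq_zero hq.1 h b))
      exact mul_nonneg (margA_nonneg hp.1 a)
        (KLn_nonneg (condB_isPMF hp hma) (condB_isPMF hq hmq) (condB_AC hq.1 hac a))
  linarith
end B

section C
variable {α β : Type*} [Fintype α] [Fintype β]

lemma push_isPMF {μ : α → ℝ} {K : α → β → ℝ} (hμ : IsPMF μ) (hK : ∀ x, IsPMF (K x)) :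
    IsPMF (push μ K) := by
  constructor
  · exact fun y => Finset.sum_nonneg fun x _ => mul_nonneg (hμ.1 x) ((hK x).1 y)
  · unfold push
    rw [Finset.sum_comm]
    calc ∑ x, ∑ y, μ x * K x y = ∑ x, μ x * ∑ y, K x y := by
          exact Finset.sum_congr rfl fun x _ => (Finset.mul_sum _ _ _).symm
      _ = 1 := by
          rw [Finset.sum_congr rfl fun x _ => by rw [(hK x).2, mul_one]]
          exact hμ.2

lemma push_AC {ν μ : α → ℝ} {K : α → β → ℝ} (hν : ∀ x, 0 ≤ ν x) (hμ : ∀ x, 0 ≤ μ x)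
    (hKn : ∀ x y, 0 ≤ K x y) (hac : AC ν μ) : AC (push ν K) (push μ K) := by
  intro y h
  unfold push at h ⊢
  have h0 : ∀ x ∈ Finset.univ, μ x * K x y = 0 :=
    (Finset.sum_eq_zero_iff_of_nonneg fun x _ => mul_nonneg (hμ x) (hKn x y)).mp h
  refine Finset.sum_eq_zero fun x _ => ?_
  rcases mul_eq_zero.mp (h0 x (Finset.mem_univ x)) with h1 | h1
  · rw [hac x h1, zero_mul]
  · rw [h1, mul_zero]

/-- KL of the joint (y,x) ↦ ν x * K x y equals KL of ν, μ. -/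
lemma KLn_joint {ν μ : α → ℝ} {K : α → β → ℝ} (hμ : ∀ x, 0 ≤ μ x)
    (hK : ∀ x, IsPMF (K x)) (hac : AC ν μ) :
    KLn (fun yx : β × α => ν yx.2 * K yx.2 yx.1) (fun yx : β × α => μ yx.2 * K yx.2 yx.1) =
      KLn ν μ := by
  unfold KLn
  rw [Fintype.sum_prod_type_right]
  refine Finset.sum_congr rfl fun x _ => ?_
  have : ∀ y, ν x * K x y * Real.log (ν x * K x y / (μ x * K x y)) =
      K x y * (ν x * Real.log (ν x / μ x)) := by
    intro y
    by_cases hk : K x y = 0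
    · simp [hk]
    · by_cases hν0 : ν x = 0
      · simp [hν0]
      · have hμ0 : μ x ≠ 0 := fun h => hν0 (hac x h)
        rw [mul_div_mul_right _ _ hk]
        ring
  rw [Finset.sum_congr rfl fun y _ => this y, ← Finset.sum_mul, (hK x).2, one_mul]

lemma joint_isPMF {ν : α → ℝ} {K : α → β → ℝ} (hν : IsPMF ν) (hK : ∀ x, IsPMF (K x)) :
    IsPMF (fun yx : β × α => ν yx.2 * K yx.2 yx.1) := by
  constructor
  · exact fun yx => mul_nonneg (hν.1 yx.2) ((hK yx.2).1 yx.1)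
  · rw [Fintype.sum_prod_type_right]
    calc ∑ x, ∑ y, ν x * K x y = ∑ x, ν x * ∑ y, K x y :=
          Finset.sum_congr rfl fun x _ => (Finset.mul_sum _ _ _).symm
      _ = 1 := by
          rw [Finset.sum_congr rfl fun x _ => by rw [(hK x).2, mul_one]]
          exact hν.2

/-- Data processing inequality for KL. -/
lemma KLn_push_le {ν μ : α → ℝ} {K : α → β → ℝ} (hν : IsPMF ν) (hμ : IsPMF μ)
    (hK : ∀ x, IsPMF (K x)) (hac : AC ν μ) :
    KLn (push ν K) (push μ K) ≤ KLn ν μ := by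
  have hacj : AC (fun yx : β × α => ν yx.2 * K yx.2 yx.1)
      (fun yx : β × α => μ yx.2 * K yx.2 yx.1) := by
    intro yx h
    simp only at h ⊢
    rcases mul_eq_zero.mp h with h1 | h1
    · rw [hac _ h1, zero_mul]
    · rw [h1, mul_zero]
  have hm : margA (fun yx : β × α => ν yx.2 * K yx.2 yx.1) = push ν K := rfl
  have hm' : margA (fun yx : β × α => μ yx.2 * K yx.2 yx.1) = push μ K := rfl
  calc KLn (push ν K) (push μ K)
      = KLn (margA (fun yx : β × α => ν yx.2 * K yx.2 yx.1))
          (margA (fun yx : β × α => μ yx.2 * K yx.2 yx.1)) := by rw [hm, hm']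
    _ ≤ KLn (fun yx : β × α => ν yx.2 * K yx.2 yx.1)
          (fun yx : β × α => μ yx.2 * K yx.2 yx.1) :=
        KLn_margA_le (joint_isPMF hν hK) (joint_isPMF hμ hK) hacj
    _ = KLn ν μ := KLn_joint hμ.1 hK hac
end C

section D
variable {α β : Type*} [Fintype α] [Fintype β] {K : α → β → ℝ}

lemma KL2_nonneg {p q : α → ℝ} (hp : IsPMF p) (hq : IsPMF q) (h : AC p q) : 0 ≤ KL2 p q := by
  rw [KL2_eq_KLn]
  exact div_nonneg (KLn_nonneg hp hq h) (Real.log_nonneg one_le_two)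

lemma etaSet_le_one (hK : ∀ x, IsPMF (K x)) :
    ∀ r ∈ { r | ∃ μ ν : α → ℝ, IsPMF μ ∧ IsPMF ν ∧ (∀ x, μ x = 0 → ν x = 0) ∧
      0 < KL2 ν μ ∧ r = KL2 (push ν K) (push μ K) / KL2 ν μ }, r ≤ 1 := by
  rintro r ⟨μ, ν, hμ, hν, hac, hpos, rfl⟩
  rw [div_le_one hpos, KL2_eq_KLn, KL2_eq_KLn]
  exact div_le_div_of_nonneg_right (KLn_push_le hν hμ hK hac)
    (le_of_lt (Real.log_pos one_lt_two)) |>.trans_eq rfl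

lemma etaCh_nonneg (hK : ∀ x, IsPMF (K x)) : 0 ≤ etaCh K := by
  refine Real.sSup_nonneg ?_
  rintro r ⟨μ, ν, hμ, hν, hac, hpos, rfl⟩
  exact div_nonneg (KL2_nonneg (push_isPMF hν hK) (push_isPMF hμ hK)
    (push_AC hν.1 hμ.1 (fun x y => (hK x).1 y) hac)) hpos.le

lemma etaCh_le_one (hK : ∀ x, IsPMF (K x)) : etaCh K ≤ 1 :=
  Real.sSup_le (etaSet_le_one hK) one_pos.le

lemma sdpi_single {ν μ : α → ℝ} (hK : ∀ x, IsPMF (K x)) (hν : IsPMF ν) (hμ : IsPMF μ)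
    (hac : AC ν μ) : KLn (push ν K) (push μ K) ≤ etaCh K * KLn ν μ := by
  have hdpi := KLn_push_le hν hμ hK hac
  have hklnn := KLn_nonneg hν hμ hac
  rcases eq_or_lt_of_le hklnn with h0 | h0
  · calc KLn (push ν K) (push μ K) ≤ KLn ν μ := hdpi
      _ = etaCh K * KLn ν μ := by rw [← h0, mul_zero]
  · have hKL2pos : 0 < KL2 ν μ := by
      rw [KL2_eq_KLn]
      exact div_pos h0 (Real.log_pos one_lt_two)
    have hmem : KL2 (push ν K) (push μ K) / KL2 ν μ ∈
        { r | ∃ μ' ν' : α → ℝ, IsPMF μ' ∧ IsPMF ν' ∧ (∀ x, μ' x = 0 → ν' x = 0) ∧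
          0 < KL2 ν' μ' ∧ r = KL2 (push ν' K) (push μ' K) / KL2 ν' μ' } :=
      ⟨μ, ν, hμ, hν, hac, hKL2pos, rfl⟩
    have hbdd : BddAbove { r | ∃ μ' ν' : α → ℝ, IsPMF μ' ∧ IsPMF ν' ∧
        (∀ x, μ' x = 0 → ν' x = 0) ∧ 0 < KL2 ν' μ' ∧
        r = KL2 (push ν' K) (push μ' K) / KL2 ν' μ' } := ⟨1, etaSet_le_one hK⟩
    have hle : KL2 (push ν K) (push μ K) / KL2 ν μ ≤ etaCh K := le_csSup hbdd hmem
    have hratio : KL2 (push ν K) (push μ K) / KL2 ν μ =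
        KLn (push ν K) (push μ K) / KLn ν μ := by
      rw [KL2_eq_KLn, KL2_eq_KLn, div_div_div_cancel_right₀]
      exact ne_of_gt (Real.log_pos one_lt_two)
    rw [hratio, div_le_iff₀ h0] at hle
    linarith [hle]
end D

section E
open scoped Classical
variable {A B C D : Type*} [Fintype A] [Fintype B] [Fintype C] [Fintype D]

noncomputable def tensK (K1 : A → B → ℝ) (K2 : C → D → ℝ) : A × C → B × D → ℝ :=
  fun ac bd => K1 ac.1 bd.1 * K2 ac.2 bd.2

lemma tensK_isPMF {K1 : A → B → ℝ} {K2 : C → D → ℝ}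
    (hK1 : ∀ a, IsPMF (K1 a)) (hK2 : ∀ c, IsPMF (K2 c)) (ac : A × C) :
    IsPMF (tensK K1 K2 ac) := by
  constructor
  · exact fun bd => mul_nonneg ((hK1 ac.1).1 bd.1) ((hK2 ac.2).1 bd.2)
  · unfold tensK
    rw [Fintype.sum_prod_type]
    calc ∑ b, ∑ d, K1 ac.1 b * K2 ac.2 d = ∑ b, K1 ac.1 b * ∑ d, K2 ac.2 d :=
          Finset.sum_congr rfl fun b _ => (Finset.mul_sum _ _ _).symm
      _ = 1 := by
          rw [Finset.sum_congr rfl fun b _ => by rw [(hK2 ac.2).2, mul_one]]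
          exact (hK1 ac.1).2

noncomputable def sliceK (K1 : A → B → ℝ) (C : Type*) [Fintype C] : A × C → B × C → ℝ :=
  fun ac bc => if bc.2 = ac.2 then K1 ac.1 bc.1 else 0

lemma sliceK_isPMF {K1 : A → B → ℝ} (hK1 : ∀ a, IsPMF (K1 a)) (ac : A × C) :
    IsPMF (sliceK K1 C ac) := by
  constructor
  · intro bc
    unfold sliceK
    split
    · exact (hK1 ac.1).1 bc.1
    · exact le_refl 0
  · unfold sliceK
    rw [Fintype.sum_prod_type]
    calc (∑ b, ∑ c, if c = ac.2 then K1 ac.1 b else 0) = ∑ b, K1 ac.1 b :=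
          Finset.sum_congr rfl fun b _ => by simp
      _ = 1 := (hK1 ac.1).2

lemma tensor_step (K1 : A → B → ℝ) (K2 : C → D → ℝ)
    (hK1 : ∀ a, IsPMF (K1 a)) (hK2 : ∀ c, IsPMF (K2 c))
    (c1 c2 : ℝ) (hc1 : 0 ≤ c1) (hc2 : 0 ≤ c2) (hc2' : c2 ≤ 1)
    (h1 : ∀ ν μ : A → ℝ, IsPMF ν → IsPMF μ → AC ν μ →
      KLn (push ν K1) (push μ K1) ≤ c1 * KLn ν μ)
    (h2 : ∀ ν μ : C → ℝ, IsPMF ν → IsPMF μ → AC ν μ →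
      KLn (push ν K2) (push μ K2) ≤ c2 * KLn ν μ)
    (ν μ : A × C → ℝ) (hν : IsPMF ν) (hμ : IsPMF μ) (hac : AC ν μ) :
    KLn (push ν (tensK K1 K2)) (push μ (tensK K1 K2)) ≤ (c1 + c2 - c1 * c2) * KLn ν μ := by
  have hKnn2 : ∀ c d, 0 ≤ K2 c d := fun c d => (hK2 c).1 d
  have hK12 := tensK_isPMF hK1 hK2
  have hKM := sliceK_isPMF (C := C) hK1
  set P := push ν (tensK K1 K2) with hPdef
  set Q := push μ (tensK K1 K2) with hQdef
  set M := push ν (sliceK K1 C) with hMdef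
  set N := push μ (sliceK K1 C) with hNdef
  have hP : IsPMF P := push_isPMF hν hK12
  have hQ : IsPMF Q := push_isPMF hμ hK12
  have hPQac : AC P Q := push_AC hν.1 hμ.1 (fun ac bd => (hK12 ac).1 bd) hac
  have hMpmf : IsPMF M := push_isPMF hν hKM
  have hNpmf : IsPMF N := push_isPMF hμ hKM
  have hMNac : AC M N := push_AC hν.1 hμ.1 (fun ac bc => (hKM ac).1 bc) hac
  have hMN_le : KLn M N ≤ KLn ν μ := KLn_push_le hν hμ hKM hac
  -- explicit formula for the sliced joint
  have hMval : ∀ (ξ : A × C → ℝ) (bc : B × C),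
      push ξ (sliceK K1 C) bc = ∑ a, ξ (a, bc.2) * K1 a bc.1 := by
    intro ξ bc
    unfold push sliceK
    rw [Fintype.sum_prod_type]
    refine Finset.sum_congr rfl fun a _ => ?_
    simp
  -- P (b, d) = ∑ c, M (b, c) * K2 c d
  have hPval : ∀ (ξ : A × C → ℝ) (b : B) (d : D),
      push ξ (tensK K1 K2) (b, d) = ∑ c, push ξ (sliceK K1 C) (b, c) * K2 c d := by
    intro ξ b d
    calc push ξ (tensK K1 K2) (b, d) = ∑ a, ∑ c, ξ (a, c) * K1 a b * K2 c d := by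
          unfold push tensK
          rw [Fintype.sum_prod_type]
          exact Finset.sum_congr rfl fun a _ => Finset.sum_congr rfl fun c _ => by ring
      _ = ∑ c, ∑ a, ξ (a, c) * K1 a b * K2 c d := Finset.sum_comm
      _ = ∑ c, push ξ (sliceK K1 C) (b, c) * K2 c d := by
          refine Finset.sum_congr rfl fun c _ => ?_
          rw [hMval, Finset.sum_mul]
  -- common formula for the B-marginals of P and M
  have hmargP : ∀ (ξ : A × C → ℝ) (b : B),
      margA (push ξ (tensK K1 K2)) b = ∑ a, ∑ c, ξ (a, c) * K1 a b := by
    intro ξ b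
    calc margA (push ξ (tensK K1 K2)) b
        = ∑ d, ∑ c, push ξ (sliceK K1 C) (b, c) * K2 c d := by
          unfold margA
          exact Finset.sum_congr rfl fun d _ => hPval ξ b d
      _ = ∑ c, push ξ (sliceK K1 C) (b, c) * ∑ d, K2 c d := by
          rw [Finset.sum_comm]
          exact Finset.sum_congr rfl fun c _ => (Finset.mul_sum _ _ _).symm
      _ = ∑ c, push ξ (sliceK K1 C) (b, c) := by
          refine Finset.sum_congr rfl fun c _ => by rw [(hK2 c).2, mul_one]
      _ = ∑ c, ∑ a, ξ (a, c) * K1 a b := Finset.sum_congr rfl fun c _ => hMval ξ (b, c)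
      _ = ∑ a, ∑ c, ξ (a, c) * K1 a b := Finset.sum_comm
  have hmargM : ∀ (ξ : A × C → ℝ) (b : B),
      margA (push ξ (sliceK K1 C)) b = ∑ a, ∑ c, ξ (a, c) * K1 a b := by
    intro ξ b
    calc margA (push ξ (sliceK K1 C)) b = ∑ c, ∑ a, ξ (a, c) * K1 a b := by
          unfold margA
          exact Finset.sum_congr rfl fun c _ => hMval ξ (b, c)
      _ = ∑ a, ∑ c, ξ (a, c) * K1 a b := Finset.sum_comm
  have hmargPM : margA M = margA P := by
    funext b; rw [hMdef, hPdef, hmargM, hmargP]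
  have hmargQN : margA N = margA Q := by
    funext b; rw [hNdef, hQdef, hmargM, hmargP]
  -- margA P = push (margA ν) K1
  have hmargPush : ∀ ξ : A × C → ℝ, margA (push ξ (tensK K1 K2)) = push (margA ξ) K1 := by
    intro ξ
    funext b
    rw [hmargP]
    unfold push margA
    exact Finset.sum_congr rfl fun a _ => (Finset.sum_mul _ _ _).symm
  -- conditional of P factorizes through K2
  have hcond : ∀ (ξ : A × C → ℝ) (b : B),
      condB (push ξ (tensK K1 K2)) b = push (condB (push ξ (sliceK K1 C)) b) K2 := by
    intro ξ b
    funext d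
    unfold condB push
    show push ξ (tensK K1 K2) (b, d) / margA (push ξ (tensK K1 K2)) b
      = ∑ c, push ξ (sliceK K1 C) (b, c) / margA (push ξ (sliceK K1 C)) b * K2 c d
    rw [hPval]
    rw [Finset.sum_div]
    refine Finset.sum_congr rfl fun c _ => ?_
    rw [div_mul_eq_mul_div]
    congr 1
    rw [hmargP, hmargM]
  -- chain rules
  have chainP : KLn P Q = KLn (margA P) (margA Q) +
      ∑ b, margA P b * KLn (condB P b) (condB Q b) := KLn_chain hP hQ hPQac
  have chainM : KLn M N = KLn (margA P) (margA Q) +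
      ∑ b, margA P b * KLn (condB M b) (condB N b) := by
    have := KLn_chain hMpmf hNpmf hMNac
    rw [hmargPM, hmargQN] at this
    exact this
  -- bound the conditional part
  have hcondle : ∑ b, margA P b * KLn (condB P b) (condB Q b) ≤
      c2 * ∑ b, margA P b * KLn (condB M b) (condB N b) := by
    rw [Finset.mul_sum]
    refine Finset.sum_le_sum fun b _ => ?_
    by_cases hmb : margA P b = 0
    · rw [hmb, zero_mul, zero_mul, mul_zero]
    · have hmbM : margA M b ≠ 0 := by rw [hmargPM]; exact hmb
      have hmbQ : margA Q b ≠ 0 := fun h => hmb (AC_margA hQ.1 hPQac b h)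
      have hmbN : margA N b ≠ 0 := by rw [hmargQN]; exact hmbQ
      have hle := h2 (condB M b) (condB N b) (condB_isPMF hMpmf hmbM)
        (condB_isPMF hNpmf hmbN) (condB_AC hNpmf.1 hMNac b)
      calc margA P b * KLn (condB P b) (condB Q b)
          = margA P b * KLn (push (condB M b) K2) (push (condB N b) K2) := by
            rw [hPdef, hQdef, hcond ν b, hcond μ b, hMdef, hNdef]
        _ ≤ margA P b * (c2 * KLn (condB M b) (condB N b)) :=
            mul_le_mul_of_nonneg_left hle (margA_nonneg hP.1 b)
        _ = c2 * (margA P b * KLn (condB M b) (condB N b)) := by ring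
  -- assemble
  have e0 : 0 ≤ KLn (margA P) (margA Q) :=
    KLn_nonneg (margA_isPMF hP) (margA_isPMF hQ) (AC_margA hQ.1 hPQac)
  have e4 : KLn (margA P) (margA Q) ≤ c1 * KLn (margA ν) (margA μ) := by
    rw [hPdef, hQdef, hmargPush ν, hmargPush μ]
    exact h1 _ _ (margA_isPMF hν) (margA_isPMF hμ) (AC_margA hμ.1 hac)
  have e5 : KLn (margA ν) (margA μ) ≤ KLn ν μ := KLn_margA_le hν hμ hac
  have e6 : ∑ b, margA P b * KLn (condB M b) (condB N b) =
      KLn M N - KLn (margA P) (margA Q) := by linarith [chainM]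
  have hfin : KLn P Q ≤ (1 - c2) * KLn (margA P) (margA Q) + c2 * KLn M N := by
    rw [chainP]
    have := hcondle
    rw [e6] at this
    nlinarith [this]
  have h14 : (1 - c2) * KLn (margA P) (margA Q) ≤ (1 - c2) * (c1 * KLn ν μ) := by
    have hA : KLn (margA P) (margA Q) ≤ c1 * KLn ν μ :=
      e4.trans (mul_le_mul_of_nonneg_left e5 hc1)
    exact mul_le_mul_of_nonneg_left hA (by linarith)
  have h26 : c2 * KLn M N ≤ c2 * KLn ν μ := mul_le_mul_of_nonneg_left hMN_le hc2
  calc KLn P Q ≤ (1 - c2) * KLn (margA P) (margA Q) + c2 * KLn M N := hfin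
    _ ≤ (1 - c2) * (c1 * KLn ν μ) + c2 * KLn ν μ := by linarith
    _ = (c1 + c2 - c1 * c2) * KLn ν μ := by ring
end E

section F
variable {U V : Type*} [Fintype U] [Fintype V]

lemma KLn_reindex {γ α : Type*} [Fintype γ] [Fintype α] (e : γ ≃ α) (p q : α → ℝ) :
    KLn (p ∘ e) (q ∘ e) = KLn p q := by
  unfold KLn
  exact Equiv.sum_comp e fun y => p y * Real.log (p y / q y)

lemma IsPMF_reindex {γ α : Type*} [Fintype γ] [Fintype α] (e : γ ≃ α) {p : α → ℝ}
    (hp : IsPMF p) : IsPMF (p ∘ e) :=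
  ⟨fun x => hp.1 (e x), by
    show ∑ x, p (e x) = 1
    rw [Equiv.sum_comp e p]; exact hp.2⟩

noncomputable def Lk (K : U → V → ℝ) (T : ℕ) : (Fin T → U) → (Fin T → V) → ℝ :=
  fun u v => ∏ t, K (u t) (v t)

lemma Lk_succ (K : U → V → ℝ) (T : ℕ) (u : Fin (T + 1) → U) (v : Fin (T + 1) → V) :
    Lk K (T + 1) u v = K (u 0) (v 0) * Lk K T (Fin.tail u) (Fin.tail v) := by
  unfold Lk
  rw [Fin.prod_univ_succ]
  rfl

lemma Lk_isPMF {K : U → V → ℝ} (hK : ∀ u, IsPMF (K u)) (T : ℕ) :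
    ∀ u : Fin T → U, IsPMF (Lk K T u) := by
  induction T with
  | zero =>
    intro u
    constructor
    · intro v
      unfold Lk
      simp
    · have : (Finset.univ : Finset (Fin 0 → V)) = {fun i => i.elim0} := by
        apply Finset.eq_singleton_iff_unique_mem.mpr
        exact ⟨Finset.mem_univ _, fun x _ => funext fun i => i.elim0⟩
      rw [this, Finset.sum_singleton]
      unfold Lk
      simp
  | succ T ih =>
    intro u
    constructor
    · intro v
      exact Finset.prod_nonneg fun t _ => (hK (u t)).1 (v t)
    · set eV := (Fin.consEquiv fun _ : Fin (T + 1) => V).symm with heV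
      rw [← Equiv.sum_comp eV.symm (fun v => Lk K (T + 1) u v)]
      have hterm : ∀ x : V × (Fin T → V),
          Lk K (T + 1) u (eV.symm x) = K (u 0) x.1 * Lk K T (Fin.tail u) x.2 := by
        intro x
        have hx : eV.symm x = Fin.cons x.1 x.2 := rfl
        rw [hx, Lk_succ, Fin.cons_zero, Fin.tail_cons]
      rw [Finset.sum_congr rfl fun x _ => hterm x, Fintype.sum_prod_type]
      calc ∑ a, ∑ g, K (u 0) a * Lk K T (Fin.tail u) g
          = ∑ a, K (u 0) a * ∑ g, Lk K T (Fin.tail u) g :=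
            Finset.sum_congr rfl fun a _ => (Finset.mul_sum _ _ _).symm
        _ = 1 := by
            rw [Finset.sum_congr rfl fun a _ => by rw [(ih (Fin.tail u)).2, mul_one]]
            exact (hK (u 0)).2
end F

section G
variable {U V : Type*} [Fintype U] [Fintype V]

lemma tensorize (K : U → V → ℝ) (hK : ∀ u, IsPMF (K u)) (T : ℕ) :
    ∀ ν μ : (Fin T → U) → ℝ, IsPMF ν → IsPMF μ → AC ν μ →
      KLn (push ν (Lk K T)) (push μ (Lk K T)) ≤ (1 - (1 - etaCh K) ^ T) * KLn ν μ := by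
  induction T with
  | zero =>
    intro ν μ hν hμ hac
    have hsum : ∀ ρ : (Fin 0 → U) → ℝ, IsPMF ρ → ∀ x, ρ x = 1 := by
      intro ρ hρ x
      have huniv : (Finset.univ : Finset (Fin 0 → U)) = {x} :=
        Finset.eq_singleton_iff_unique_mem.mpr
          ⟨Finset.mem_univ _, fun y _ => funext fun i => i.elim0⟩
      have := hρ.2
      rw [huniv, Finset.sum_singleton] at this
      exact this
    have hνμ : ν = μ := funext fun x => by rw [hsum ν hν x, hsum μ hμ x]
    rw [hνμ, pow_zero, sub_self, zero_mul, KLn_self]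
  | succ T ih =>
    intro ν μ hν hμ hac
    have hη0 : 0 ≤ etaCh K := etaCh_nonneg hK
    have hη1 : etaCh K ≤ 1 := etaCh_le_one hK
    have hpow0 : (0:ℝ) ≤ (1 - etaCh K) ^ T := pow_nonneg (by linarith) T
    have hpow1 : (1 - etaCh K) ^ T ≤ 1 := pow_le_one₀ (by linarith) (by linarith)
    set eU := (Fin.consEquiv fun _ : Fin (T + 1) => U).symm with heU
    set eV := (Fin.consEquiv fun _ : Fin (T + 1) => V).symm with heV
    have hν' : IsPMF (ν ∘ ⇑eU.symm) := IsPMF_reindex eU.symm hν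
    have hμ' : IsPMF (μ ∘ ⇑eU.symm) := IsPMF_reindex eU.symm hμ
    have hac' : AC (ν ∘ ⇑eU.symm) (μ ∘ ⇑eU.symm) := fun x h => hac _ h
    have key : ∀ ξ : (Fin (T + 1) → U) → ℝ,
        push ξ (Lk K (T + 1)) = (push (ξ ∘ ⇑eU.symm) (tensK K (Lk K T))) ∘ ⇑eV := by
      intro ξ
      funext v
      show push ξ (Lk K (T + 1)) v = push (ξ ∘ ⇑eU.symm) (tensK K (Lk K T)) (eV v)
      unfold push
      rw [← Equiv.sum_comp eU.symm
        (fun u => ξ u * Lk K (T + 1) u v)]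
      refine Finset.sum_congr rfl fun x _ => ?_
      have hx : eU.symm x = Fin.cons x.1 x.2 := rfl
      have hv : eV v = (v 0, Fin.tail v) := rfl
      simp only [Function.comp_apply]
      congr 1
      rw [hx, hv, Lk_succ, Fin.cons_zero, Fin.tail_cons]
      rfl
    calc KLn (push ν (Lk K (T + 1))) (push μ (Lk K (T + 1)))
        = KLn ((push (ν ∘ ⇑eU.symm) (tensK K (Lk K T))) ∘ ⇑eV)
            ((push (μ ∘ ⇑eU.symm) (tensK K (Lk K T))) ∘ ⇑eV) := by rw [key ν, key μ]
      _ = KLn (push (ν ∘ ⇑eU.symm) (tensK K (Lk K T)))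
            (push (μ ∘ ⇑eU.symm) (tensK K (Lk K T))) := KLn_reindex eV _ _
      _ ≤ (etaCh K + (1 - (1 - etaCh K) ^ T) - etaCh K * (1 - (1 - etaCh K) ^ T)) *
            KLn (ν ∘ ⇑eU.symm) (μ ∘ ⇑eU.symm) :=
          tensor_step K (Lk K T) hK (Lk_isPMF hK T) (etaCh K) (1 - (1 - etaCh K) ^ T)
            hη0 (by linarith) (by linarith)
            (fun ν₀ μ₀ h₀ h₁ h₂ => sdpi_single hK h₀ h₁ h₂) ih
            (ν ∘ ⇑eU.symm) (μ ∘ ⇑eU.symm) hν' hμ' hac'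
      _ = (1 - (1 - etaCh K) ^ (T + 1)) * KLn (ν ∘ ⇑eU.symm) (μ ∘ ⇑eU.symm) := by
          rw [pow_succ]; ring
      _ = (1 - (1 - etaCh K) ^ (T + 1)) * KLn ν μ := by rw [KLn_reindex eU.symm ν μ]
end G

section H
variable {α β : Type*} [Fintype α] [Fintype β]

noncomputable def MIn (w : α × β → ℝ) : ℝ :=
  ∑ x : α × β, w x * Real.log (w x / (margA w x.1 * margB w x.2))

lemma MI2_eq_MIn (w : α × β → ℝ) : MI2 w = MIn w / Real.log 2 := by
  unfold MI2 MIn Real.logb margA margB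
  rw [Finset.sum_div]
  exact Finset.sum_congr rfl fun x _ => by rw [mul_div_assoc]

lemma MIn_eq {w : α × β → ℝ} (hw : IsPMF w) :
    MIn w = ∑ a, margA w a * KLn (condB w a) (margB w) := by
  unfold MIn
  rw [Fintype.sum_prod_type]
  refine Finset.sum_congr rfl fun a _ => ?_
  by_cases hma : margA w a = 0
  · rw [hma, zero_mul]
    exact Finset.sum_eq_zero fun b _ => by rw [margA_eq_zero hw.1 hma b, zero_mul]
  · unfold KLn condB
    rw [Finset.mul_sum]
    refine Finset.sum_congr rfl fun b _ => ?_
    have hc : margA w a * (w (a, b) / margA w a) = w (a, b) := by field_simp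
    rw [← mul_assoc, hc, div_div]
end H

/-- SDPI for T memoryless uses of a channel:
I(Y;V^T) ≤ (1 − (1−η)^T)·I(Y;U^T) where η = η(P_{V|U}). -/
theorem sdpi_memoryless_T_uses
    {Y U V : Type*} [Fintype Y] [Fintype U] [Fintype V]
    (T : ℕ)
    (K : U → V → ℝ) (hK : ∀ u, IsPMF (K u))
    (q : Y × (Fin T → U) → ℝ) (hq : IsPMF q)
    (p : Y × (Fin T → U) × (Fin T → V) → ℝ)
    (hp : ∀ y u v, p (y, u, v) = q (y, u) * ∏ t, K (u t) (v t)) :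
    MI2 (fun yv : Y × (Fin T → V) => ∑ u, p (yv.1, u, yv.2)) ≤
      (1 - (1 - etaCh K) ^ T) * MI2 q := by
  have hr_eq : (fun yv : Y × (Fin T → V) => ∑ u, p (yv.1, u, yv.2)) =
      fun yv : Y × (Fin T → V) => ∑ u, q (yv.1, u) * Lk K T u yv.2 :=
    funext fun yv => Finset.sum_congr rfl fun u _ => hp yv.1 u yv.2
  rw [hr_eq]
  set r : Y × (Fin T → V) → ℝ := fun yv => ∑ u, q (yv.1, u) * Lk K T u yv.2 with hrdef
  have hLk := Lk_isPMF hK T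
  -- r is a PMF
  have hrnn : ∀ x, 0 ≤ r x := fun x =>
    Finset.sum_nonneg fun u _ => mul_nonneg (hq.1 (x.1, u)) ((hLk u).1 x.2)
  have hsum_inner : ∀ y : Y, ∑ v : Fin T → V, ∑ u, q (y, u) * Lk K T u v =
      ∑ u, q (y, u) := by
    intro y
    rw [Finset.sum_comm]
    refine Finset.sum_congr rfl fun u _ => ?_
    rw [← Finset.mul_sum, (hLk u).2, mul_one]
  have hr : IsPMF r := by
    refine ⟨hrnn, ?_⟩
    rw [Fintype.sum_prod_type]
    calc ∑ y, ∑ v, r (y, v) = ∑ y, ∑ u, q (y, u) := by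
          refine Finset.sum_congr rfl fun y _ => ?_
          exact hsum_inner y
      _ = 1 := by rw [← Fintype.sum_prod_type]; exact hq.2
  -- marginals and conditionals
  have hmargAr : margA r = margA q := by
    funext y
    exact hsum_inner y
  have hcond : ∀ y, condB r y = push (condB q y) (Lk K T) := by
    intro y
    funext v
    unfold condB push
    rw [hmargAr]
    show (∑ u, q (y, u) * Lk K T u v) / margA q y = _
    rw [Finset.sum_div]
    exact Finset.sum_congr rfl fun u _ => by rw [div_mul_eq_mul_div]
  have hmargBr : margB r = push (margB q) (Lk K T) := by
    funext v
    unfold margB push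
    show (∑ y, ∑ u, q (y, u) * Lk K T u v) = _
    rw [Finset.sum_comm]
    exact Finset.sum_congr rfl fun u _ => (Finset.sum_mul _ _ _).symm
  -- per-y data
  have hmargBq : IsPMF (margB q) := margB_isPMF hq
  have hacy : ∀ y, AC (condB q y) (margB q) := by
    intro y u h
    have h0 : ∀ y' ∈ Finset.univ, q (y', u) = 0 :=
      (Finset.sum_eq_zero_iff_of_nonneg fun y' _ => hq.1 (y', u)).mp h
    unfold condB
    rw [h0 y (Finset.mem_univ y), zero_div]
  have hlog : (0:ℝ) < Real.log 2 := Real.log_pos one_lt_two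
  -- main estimate on MIn
  have hmain : MIn r ≤ (1 - (1 - etaCh K) ^ T) * MIn q := by
    rw [MIn_eq hr, MIn_eq hq, hmargAr, Finset.mul_sum]
    refine Finset.sum_le_sum fun y _ => ?_
    by_cases hmy : margA q y = 0
    · rw [hmy, zero_mul, zero_mul, mul_zero]
    · calc margA q y * KLn (condB r y) (margB r)
          = margA q y * KLn (push (condB q y) (Lk K T)) (push (margB q) (Lk K T)) := by
            rw [hcond y, hmargBr]
        _ ≤ margA q y * ((1 - (1 - etaCh K) ^ T) * KLn (condB q y) (margB q)) :=
            mul_le_mul_of_nonneg_left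
              (tensorize K hK T (condB q y) (margB q) (condB_isPMF hq hmy) hmargBq (hacy y))
              (margA_nonneg hq.1 y)
        _ = (1 - (1 - etaCh K) ^ T) * (margA q y * KLn (condB q y) (margB q)) := by ring
  rw [MI2_eq_MIn, MI2_eq_MIn, ← mul_div_assoc]
  exact div_le_div_of_nonneg_right hmain hlog.le |>.trans_eq rfl
end
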